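/- The minimum of the Flory-Huggins potential F_fh with θ > 2 on (-1,1) is attained at the two symmetric points ±u* where u* ∈ (0,1) is the unique positive solution of ln((1+u)/(1-u)) = θu. -/

import Mathlib

/-!
The derivative `F'(u) = log (1 + u) - log (1 - u) - θ u` of the potential has derivative
`2 / (1 - u²) - θ`, which vanishes on `[0, 1)` only at the spinodal point `√(1 - 2/θ)`.
So `F'` decreases from `F'(0) = 0` up to the spinodal point and then increases, with
`F'(1 - exp (-θ)) > 0`: it has exactly one zero `u*` in `(0, 1)`, is negative before it and
positive after it. Hence the potential, which is even, is minimal on `[0, 1)` at `u*` and on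
`(-1, 1)` at `±u*`.
-/

open Real Set

namespace FloryHuggins

noncomputable def potential (θ u : ℝ) : ℝ :=
  (1 + u) * log (1 + u) + (1 - u) * log (1 - u) - θ / 2 * u ^ 2

noncomputable def potentialDeriv (θ u : ℝ) : ℝ := log (1 + u) - log (1 - u) - θ * u

/-- The nonnegative zero of the second derivative `2 / (1 - u²) - θ` of the potential. -/
noncomputable def spinodal (θ : ℝ) : ℝ := √(1 - 2 / θ)

variable {θ u v : ℝ}

theorem potential_neg (θ u : ℝ) : potential θ (-u) = potential θ u := by
  rw [potential, potential, ← sub_eq_add_neg, sub_neg_eq_add, neg_sq]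
  ring

theorem potentialDeriv_zero (θ : ℝ) : potentialDeriv θ 0 = 0 := by simp [potentialDeriv]

theorem potentialDeriv_eq_zero_iff (hu : u ∈ Ioo (-1 : ℝ) 1) :
    potentialDeriv θ u = 0 ↔ log ((1 + u) / (1 - u)) = θ * u := by
  rw [potentialDeriv, log_div (by linarith [hu.1]) (by linarith [hu.2]), sub_eq_zero]

theorem hasDerivAt_log_one_add (hu : u ∈ Ioo (-1 : ℝ) 1) :
    HasDerivAt (fun x => log (1 + x)) (1 / (1 + u)) u := by
  simpa using ((hasDerivAt_id' u).const_add 1).log (by linarith [hu.1])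

theorem hasDerivAt_log_one_sub (hu : u ∈ Ioo (-1 : ℝ) 1) :
    HasDerivAt (fun x => log (1 - x)) (-(1 / (1 - u))) u := by
  simpa [neg_div] using ((hasDerivAt_id' u).const_sub 1).log (by linarith [hu.2])

theorem hasDerivAt_potential (hu : u ∈ Ioo (-1 : ℝ) 1) :
    HasDerivAt (potential θ) (potentialDeriv θ u) u := by
  have hp : 1 + u ≠ 0 := by linarith [hu.1]
  have hm : 1 - u ≠ 0 := by linarith [hu.2]
  have h := ((((hasDerivAt_id' u).const_add 1).mul (hasDerivAt_log_one_add hu)).add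
    (((hasDerivAt_id' u).const_sub 1).mul (hasDerivAt_log_one_sub hu))).sub
    ((hasDerivAt_pow 2 u).const_mul (θ / 2))
  refine h.congr_deriv ?_
  simp only [potentialDeriv]
  field_simp
  norm_num
  ring

theorem hasDerivAt_potentialDeriv (hu : u ∈ Ioo (-1 : ℝ) 1) :
    HasDerivAt (potentialDeriv θ) (2 / (1 - u ^ 2) - θ) u := by
  have hp : 1 + u ≠ 0 := by linarith [hu.1]
  have hm : 1 - u ≠ 0 := by linarith [hu.2]
  have h := ((hasDerivAt_log_one_add hu).sub (hasDerivAt_log_one_sub hu)).sub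
    ((hasDerivAt_id' u).const_mul θ)
  refine h.congr_deriv ?_
  rw [show 1 - u ^ 2 = (1 + u) * (1 - u) by ring]
  field_simp
  ring

theorem continuousOn_potentialDeriv : ContinuousOn (potentialDeriv θ) (Ioo (-1) 1) :=
  continuousOn_of_forall_continuousAt fun _ hu => (hasDerivAt_potentialDeriv hu).continuousAt

theorem spinodal_nonneg (θ : ℝ) : 0 ≤ spinodal θ := sqrt_nonneg _

theorem spinodal_lt_one (hθ : 0 < θ) : spinodal θ < 1 := by
  rw [spinodal, sqrt_lt' one_pos]
  have : 0 < 2 / θ := by positivity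
  linarith

theorem spinodal_pos (hθ : 2 < θ) : 0 < spinodal θ :=
  sqrt_pos.2 (sub_pos.2 ((div_lt_one (by linarith)).2 hθ))

theorem two_div_one_sub_sq_lt_iff (hθ : 0 < θ) (hu : u ^ 2 < 1) :
    2 / (1 - u ^ 2) < θ ↔ u ^ 2 < 1 - 2 / θ := by
  rw [div_lt_iff₀ (by linarith), lt_sub_comm, div_lt_iff₀ hθ, mul_comm]

theorem lt_two_div_one_sub_sq_iff (hθ : 0 < θ) (hu : u ^ 2 < 1) :
    θ < 2 / (1 - u ^ 2) ↔ 1 - 2 / θ < u ^ 2 := by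
  rw [lt_div_iff₀ (by linarith), sub_lt_comm, lt_div_iff₀ hθ, mul_comm]

theorem strictAntiOn_potentialDeriv (hθ : 0 < θ) :
    StrictAntiOn (potentialDeriv θ) (Icc 0 (spinodal θ)) := by
  have hsub : Icc 0 (spinodal θ) ⊆ Ioo (-1) 1 :=
    Icc_subset_Ioo (by norm_num) (spinodal_lt_one hθ)
  refine strictAntiOn_of_deriv_neg (convex_Icc _ _) (continuousOn_potentialDeriv.mono hsub)
    fun x hx => ?_
  rw [interior_Icc] at hx
  have hx₁ : x ∈ Ioo (-1 : ℝ) 1 := hsub (Ioo_subset_Icc_self hx)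
  rw [(hasDerivAt_potentialDeriv hx₁).deriv, sub_neg,
    two_div_one_sub_sq_lt_iff hθ (by nlinarith [hx₁.1, hx₁.2])]
  exact (lt_sqrt hx.1.le).1 hx.2

theorem strictMonoOn_potentialDeriv (hθ : 0 < θ) :
    StrictMonoOn (potentialDeriv θ) (Ico (spinodal θ) 1) := by
  have hsub : Ico (spinodal θ) 1 ⊆ Ioo (-1) 1 :=
    Ico_subset_Ioo_left (by linarith [spinodal_nonneg θ])
  refine strictMonoOn_of_deriv_pos (convex_Ico _ _) (continuousOn_potentialDeriv.mono hsub)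
    fun x hx => ?_
  rw [interior_Ico] at hx
  have hx₁ : x ∈ Ioo (-1 : ℝ) 1 := hsub (Ioo_subset_Ico_self hx)
  rw [(hasDerivAt_potentialDeriv hx₁).deriv, sub_pos,
    lt_two_div_one_sub_sq_iff hθ (by nlinarith [hx₁.1, hx₁.2])]
  exact (sqrt_lt' ((spinodal_nonneg θ).trans_lt hx.1)).1 hx.1

theorem potentialDeriv_neg_of_mem_Ioc (hθ : 0 < θ) (hv : v ∈ Ioc 0 (spinodal θ)) :
    potentialDeriv θ v < 0 :=
  potentialDeriv_zero θ ▸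
    strictAntiOn_potentialDeriv hθ ⟨le_rfl, spinodal_nonneg θ⟩ ⟨hv.1.le, hv.2⟩ hv.1

theorem potentialDeriv_one_sub_exp_neg_pos (hθ : 0 < θ) :
    0 < potentialDeriv θ (1 - exp (-θ)) := by
  have hexp : exp (-θ) < 1 := exp_lt_one_iff.2 (by linarith)
  have hlog : 0 < log (1 + (1 - exp (-θ))) := log_pos (by linarith [exp_pos (-θ)])
  rw [potentialDeriv, sub_sub_cancel, log_exp]
  nlinarith [mul_pos hθ (exp_pos (-θ))]

theorem exists_potentialDeriv_eq_zero (hθ : 2 < θ) :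
    ∃ u ∈ Ioo (0 : ℝ) 1, potentialDeriv θ u = 0 := by
  have hθ₀ : 0 < θ := by linarith
  set b := 1 - exp (-θ)
  have hb₀ : 0 < b := by linarith [exp_lt_one_iff.2 (show -θ < 0 by linarith)]
  have hb₁ : b < 1 := by linarith [exp_pos (-θ)]
  have hs₀ : 0 < spinodal θ := spinodal_pos hθ
  have hsb : spinodal θ < b := by
    by_contra! h
    exact (potentialDeriv_neg_of_mem_Ioc hθ₀ ⟨hb₀, h⟩).not_gt
      (potentialDeriv_one_sub_exp_neg_pos hθ₀)
  have hcont : ContinuousOn (potentialDeriv θ) (Icc (spinodal θ) b) :=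
    continuousOn_potentialDeriv.mono (Icc_subset_Ioo (by linarith) hb₁)
  obtain ⟨u, hu, hroot⟩ := intermediate_value_Ioo hsb.le hcont
    ⟨potentialDeriv_neg_of_mem_Ioc hθ₀ ⟨hs₀, le_rfl⟩,
      potentialDeriv_one_sub_exp_neg_pos hθ₀⟩
  exact ⟨u, ⟨hs₀.trans hu.1, hu.2.trans hb₁⟩, hroot⟩

theorem spinodal_lt_of_potentialDeriv_eq_zero (hθ : 0 < θ) (hu : u ∈ Ioo (0 : ℝ) 1)
    (hroot : potentialDeriv θ u = 0) : spinodal θ < u := by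
  by_contra! h
  exact (potentialDeriv_neg_of_mem_Ioc hθ ⟨hu.1, h⟩).ne hroot

theorem potentialDeriv_neg_of_lt_root (hθ : 0 < θ) (hu : u ∈ Ioo (0 : ℝ) 1)
    (hroot : potentialDeriv θ u = 0) (hv : v ∈ Ioo 0 u) : potentialDeriv θ v < 0 := by
  rcases le_or_gt v (spinodal θ) with hvs | hvs
  · exact potentialDeriv_neg_of_mem_Ioc hθ ⟨hv.1, hvs⟩
  · exact hroot ▸ strictMonoOn_potentialDeriv hθ ⟨hvs.le, hv.2.trans hu.2⟩
      ⟨(spinodal_lt_of_potentialDeriv_eq_zero hθ hu hroot).le, hu.2⟩ hv.2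

theorem potentialDeriv_pos_of_root_lt (hθ : 0 < θ) (hu : u ∈ Ioo (0 : ℝ) 1)
    (hroot : potentialDeriv θ u = 0) (hv : v ∈ Ioo u 1) : 0 < potentialDeriv θ v := by
  have hsu := spinodal_lt_of_potentialDeriv_eq_zero hθ hu hroot
  exact hroot ▸
    strictMonoOn_potentialDeriv hθ ⟨hsu.le, hu.2⟩ ⟨(hsu.trans hv.1).le, hv.2⟩ hv.1

theorem eq_of_potentialDeriv_eq_zero (hθ : 0 < θ) (hu : u ∈ Ioo (0 : ℝ) 1)
    (hroot : potentialDeriv θ u = 0) (hv : v ∈ Ioo (0 : ℝ) 1)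
    (hvroot : potentialDeriv θ v = 0) : v = u :=
  (strictMonoOn_potentialDeriv hθ).injOn
    ⟨(spinodal_lt_of_potentialDeriv_eq_zero hθ hv hvroot).le, hv.2⟩
    ⟨(spinodal_lt_of_potentialDeriv_eq_zero hθ hu hroot).le, hu.2⟩ (hvroot.trans hroot.symm)

theorem isMinOn_potential (hθ : 0 < θ) (hu : u ∈ Ioo (0 : ℝ) 1)
    (hroot : potentialDeriv θ u = 0) : IsMinOn (potential θ) (Ioo (-1) 1) u := by
  have hderiv : ∀ x ∈ Ico (0 : ℝ) 1, HasDerivAt (potential θ) (potentialDeriv θ x) x :=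
    fun x hx => hasDerivAt_potential ⟨by linarith [hx.1], hx.2⟩
  have hdiff : DifferentiableOn ℝ (potential θ) (Ioo 0 1) := fun x hx =>
    (hderiv x (Ioo_subset_Ico_self hx)).differentiableAt.differentiableWithinAt
  have hmin : IsMinOn (potential θ) (Ico 0 1) u :=
    isMinOn_Ico_of_deriv (hderiv 0 ⟨le_rfl, one_pos⟩).continuousAt
      (hderiv u (Ioo_subset_Ico_self hu)).continuousAt
      (hdiff.mono (Ioo_subset_Ioo_right hu.2.le)) (hdiff.mono (Ioo_subset_Ioo_left hu.1.le))
      (fun x hx => (hderiv x ⟨hx.1.le, hx.2.trans hu.2⟩).deriv ▸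
        (potentialDeriv_neg_of_lt_root hθ hu hroot hx).le)
      (fun x hx => (hderiv x ⟨hu.1.le.trans hx.1.le, hx.2⟩).deriv ▸
        (potentialDeriv_pos_of_root_lt hθ hu hroot hx).le)
  refine isMinOn_iff.2 fun v hv => ?_
  rcases le_total 0 v with hv₀ | hv₀
  · exact hmin ⟨hv₀, hv.2⟩
  · rw [← potential_neg θ v]
    exact hmin ⟨neg_nonneg.2 hv₀, by linarith [hv.1]⟩

end FloryHuggins

open FloryHuggins

/-- For `θ > 2`, the Flory-Huggins potential on `(-1,1)` attains its minimum at the two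
symmetric points `±u*`, where `u* ∈ (0,1)` is the unique positive solution of
`ln((1+u)/(1-u)) = θu`. -/
theorem flory_huggins_minimizers
    (θ : ℝ) (hθ : 2 < θ) (F : ℝ → ℝ)
    (hF : ∀ u, F u = (1 + u) * Real.log (1 + u) + (1 - u) * Real.log (1 - u) - θ / 2 * u ^ 2) :
    ∃ ustar : ℝ, ustar ∈ Set.Ioo (0 : ℝ) 1 ∧
      Real.log ((1 + ustar) / (1 - ustar)) = θ * ustar ∧
      (∀ v ∈ Set.Ioo (0 : ℝ) 1, Real.log ((1 + v) / (1 - v)) = θ * v → v = ustar) ∧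
      (∀ v ∈ Set.Ioo (-1 : ℝ) 1, F ustar ≤ F v) ∧
      F (-ustar) = F ustar := by
  obtain rfl : F = potential θ := funext hF
  have hθ₀ : 0 < θ := by linarith
  have mem_Ioo_neg_one {v : ℝ} (hv : v ∈ Ioo (0 : ℝ) 1) : v ∈ Ioo (-1 : ℝ) 1 :=
    Ioo_subset_Ioo_left (by norm_num) hv
  obtain ⟨u, hu, hroot⟩ := exists_potentialDeriv_eq_zero hθ
  refine ⟨u, hu, (potentialDeriv_eq_zero_iff (mem_Ioo_neg_one hu)).1 hroot, fun v hv hvroot => ?_,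
    isMinOn_potential hθ₀ hu hroot, potential_neg θ u⟩
  exact eq_of_potentialDeriv_eq_zero hθ₀ hu hroot hv
    ((potentialDeriv_eq_zero_iff (mem_Ioo_neg_one hv)).2 hvroot)
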